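/- Let λ > 1 and let E : ℕ → ℝ satisfy κ₁·λⁿ ≤ E(n) ≤ κ₂·λⁿ for all n ≥ 1, with κ₁, κ₂ > 0, and let C(n) = (1/n)·∑_{d | n} μ(n/d)·E(d). Then ∑_{n=1}^{N} C(n) is comparable to λᴺ/N: there exist positive constants σ₁, σ₂ such that σ₁·λᴺ/N ≤ ∑_{n=1}^{N} C(n) ≤ σ₂·λᴺ/N for all sufficiently large N. -/

import Mathlib

open Finset ArithmeticFunction Asymptotics Filter
open scoped ArithmeticFunction.Moebius

/-!
Since `μ(1) = 1`, `C n = E n / n + R n`, where `R n` only involves `E d` for proper divisors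
`d ∣ n`, all of which are `≤ n / 2`; hence `|R n| = O(λ^(n/2))`, and the total error over
`n ≤ N` is `O(N λ^(N/2)) = o(λ^N / N)`. The main term `∑_{n ≤ N} E n / n` is at least its last
summand `κ₁ λ^N / N`, and at most `κ₂ ∑_{n ≤ N} λ^n / n`, which is `O(λ^N / N)`: the terms with
`n ≤ N / 2` add up to `O(λ^(N/2))`, and those with `n > N / 2` have `1 / n < 2 / N`.
-/

lemma Nat.le_div_two_of_mem_properDivisors {m n : ℕ} (h : m ∈ n.properDivisors) : m ≤ n / 2 := by
  have h2 : 2 ≤ n / m := Nat.one_lt_div_of_mem_properDivisors h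
  rw [Nat.le_div_iff_mul_le two_pos]
  calc m * 2 ≤ m * (n / m) := Nat.mul_le_mul_left m h2
    _ ≤ n := Nat.mul_div_le n m

section
variable {lam : ℝ}

lemma sum_pow_le_of_forall_le (hlam : 1 < lam) {s : Finset ℕ} {m : ℕ} (hs : ∀ d ∈ s, d ≤ m) :
    ∑ d ∈ s, lam ^ d ≤ lam / (lam - 1) * lam ^ m := by
  have hlam1 : 0 < lam - 1 := sub_pos.2 hlam
  calc ∑ d ∈ s, lam ^ d ≤ ∑ d ∈ range (m + 1), lam ^ d :=
        sum_le_sum_of_subset_of_nonneg (fun d hd => mem_range.2 (Nat.lt_succ_of_le (hs d hd)))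
          (fun _ _ _ => by positivity)
    _ = (lam ^ (m + 1) - 1) / (lam - 1) := geom_sum_eq hlam.ne' _
    _ ≤ lam / (lam - 1) * lam ^ m := by
        rw [div_mul_eq_mul_div, ← pow_succ']
        gcongr
        linarith

lemma sum_Icc_pow_div_le (hlam : 1 < lam) (N : ℕ) :
    ∑ n ∈ Icc 1 N, lam ^ n / n ≤ lam / (lam - 1) * (lam ^ (N / 2) + 2 * lam ^ N / N) := by
  rw [← sum_filter_add_sum_filter_not _ (· ≤ N / 2), mul_add]
  gcongr ?_ + ?_
  · calc ∑ n ∈ Icc 1 N with n ≤ N / 2, lam ^ n / n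
        ≤ ∑ n ∈ Icc 1 N with n ≤ N / 2, lam ^ n := by
          gcongr with n hn
          exact div_le_self (by positivity) (by exact_mod_cast (mem_Icc.1 (mem_filter.1 hn).1).1)
      _ ≤ _ := sum_pow_le_of_forall_le hlam fun n hn => (mem_filter.1 hn).2
  · calc ∑ n ∈ Icc 1 N with ¬n ≤ N / 2, lam ^ n / n
        ≤ ∑ n ∈ Icc 1 N with ¬n ≤ N / 2, 2 / N * lam ^ n := by
          gcongr with n hn
          obtain ⟨hnI, hnN⟩ := mem_filter.1 hn
          obtain ⟨hn1, hnle⟩ := mem_Icc.1 hnI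
          have hN : (N : ℝ) ≤ 2 * n := by exact_mod_cast (by omega : N ≤ 2 * n)
          have hn0 : (0 : ℝ) < n := by exact_mod_cast hn1
          have hN0 : (0 : ℝ) < N := by exact_mod_cast (by omega : 0 < N)
          rw [div_mul_eq_mul_div, div_le_div_iff₀ hn0 hN0]
          linarith [mul_le_mul_of_nonneg_left hN (pow_nonneg (by linarith : (0 : ℝ) ≤ lam) n)]
      _ = 2 / N * ∑ n ∈ Icc 1 N with ¬n ≤ N / 2, lam ^ n := (mul_sum _ _ _).symm
      _ ≤ 2 / N * (lam / (lam - 1) * lam ^ N) := by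
          gcongr
          exact sum_pow_le_of_forall_le hlam fun n hn => (mem_Icc.1 (mem_filter.1 hn).1).2
      _ = _ := by ring

lemma pow_div_two_le_sqrt_pow (hlam : 1 ≤ lam) (N : ℕ) : lam ^ (N / 2) ≤ √lam ^ N := by
  calc lam ^ (N / 2) = √lam ^ (2 * (N / 2)) := by
        rw [pow_mul, Real.sq_sqrt (by linarith)]
    _ ≤ √lam ^ N := pow_le_pow_right₀ (Real.one_le_sqrt.2 hlam) (Nat.mul_div_le N 2)

lemma isLittleO_sq_mul_pow_div_two (hlam : 1 < lam) :
    (fun N : ℕ => (N : ℝ) ^ 2 * lam ^ (N / 2)) =o[atTop] fun N => lam ^ N := by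
  have hsqrt : 1 < √lam := Real.lt_sqrt_of_sq_lt (by simpa using hlam)
  have hbig : (fun N : ℕ => (N : ℝ) ^ 2 * lam ^ (N / 2)) =O[atTop]
      fun N => (N : ℝ) ^ 2 * √lam ^ N := by
    refine IsBigO.of_bound 1 (Eventually.of_forall fun N => ?_)
    rw [one_mul, Real.norm_of_nonneg (by positivity), Real.norm_of_nonneg (by positivity)]
    gcongr
    exact pow_div_two_le_sqrt_pow hlam.le N
  refine hbig.trans_isLittleO ?_
  have := (isLittleO_pow_const_const_pow_of_one_lt (R := ℝ) 2 hsqrt).mul_isBigO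
    (isBigO_refl (fun N : ℕ => √lam ^ N) atTop)
  simpa only [← mul_pow, Real.mul_self_sqrt (by linarith : (0 : ℝ) ≤ lam)] using this

lemma abs_sum_divisors_moebius_mul_sub_le (hlam : 1 < lam) {f : ℕ → ℝ} {B : ℝ}
    (hf : ∀ d, 1 ≤ d → |f d| ≤ B * lam ^ d) {n : ℕ} (hn : n ≠ 0) :
    |∑ d ∈ n.divisors, ((μ (n / d) : ℤ) : ℝ) * f d - f n| ≤
      B * (lam / (lam - 1)) * lam ^ (n / 2) := by
  have hB : 0 ≤ B := by
    have h1 := (abs_nonneg _).trans (hf 1 le_rfl)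
    rw [pow_one] at h1
    exact nonneg_of_mul_nonneg_left h1 (by linarith)
  rw [← Nat.cons_self_properDivisors hn, sum_cons, Nat.div_self (Nat.pos_of_ne_zero hn),
    moebius_apply_one, Int.cast_one, one_mul, add_sub_cancel_left, mul_assoc]
  calc |∑ d ∈ n.properDivisors, ((μ (n / d) : ℤ) : ℝ) * f d|
      ≤ ∑ d ∈ n.properDivisors, |((μ (n / d) : ℤ) : ℝ) * f d| := abs_sum_le_sum_abs _ _
    _ ≤ ∑ d ∈ n.properDivisors, B * lam ^ d := by
        gcongr with d hd
        rw [abs_mul]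
        calc |((μ (n / d) : ℤ) : ℝ)| * |f d| ≤ 1 * |f d| := by
              gcongr
              exact_mod_cast abs_moebius_le_one
          _ ≤ B * lam ^ d := (one_mul _).trans_le (hf d (Nat.pos_of_mem_properDivisors hd))
    _ = B * ∑ d ∈ n.properDivisors, lam ^ d := (mul_sum _ _ _).symm
    _ ≤ B * (lam / (lam - 1) * lam ^ (n / 2)) := by
        gcongr
        exact sum_pow_le_of_forall_le hlam fun d hd => Nat.le_div_two_of_mem_properDivisors hd

end

lemma abs_sum_Icc_sub_sum_le {f g h : ℕ → ℝ} (hh : Monotone h)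
    (hfg : ∀ n, 1 ≤ n → |f n - g n| ≤ h n) (N : ℕ) :
    |∑ n ∈ Icc 1 N, f n - ∑ n ∈ Icc 1 N, g n| ≤ N * h N := by
  rw [← sum_sub_distrib]
  calc |∑ n ∈ Icc 1 N, (f n - g n)| ≤ ∑ n ∈ Icc 1 N, |f n - g n| := abs_sum_le_sum_abs _ _
    _ ≤ ∑ n ∈ Icc 1 N, h N := by
        gcongr with n hn
        obtain ⟨hn1, hnN⟩ := mem_Icc.1 hn
        exact (hfg n hn1).trans (hh hnN)
    _ = N * h N := by simp

lemma exists_bounds_of_abs_sub_le {lam κ₁ K : ℝ} (hlam : 1 < lam) (hκ₁ : 0 < κ₁) (hK : 0 < K)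
    {S T : ℕ → ℝ}
    (hT : ∀ N, 1 ≤ N → κ₁ * lam ^ N / N ≤ T N ∧ T N ≤ K * (lam ^ (N / 2) + 2 * lam ^ N / N))
    (hST : ∀ N, |S N - T N| ≤ N * (K * lam ^ (N / 2))) :
    ∃ σ₁ σ₂ : ℝ, 0 < σ₁ ∧ 0 < σ₂ ∧ ∃ N₁ : ℕ, ∀ N : ℕ, N₁ ≤ N →
      σ₁ * lam ^ N / N ≤ S N ∧ S N ≤ σ₂ * lam ^ N / N := by
  set ε := min (κ₁ / (2 * K)) (1 / 2)
  have hε : 0 < ε := lt_min (by positivity) (by norm_num)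
  have hKε₁ : K * ε ≤ κ₁ / 2 := by
    calc K * ε ≤ K * (κ₁ / (2 * K)) := by gcongr; exact min_le_left _ _
      _ = κ₁ / 2 := by field_simp
  have hKε₂ : K * ε ≤ K / 2 := by
    calc K * ε ≤ K * (1 / 2) := by gcongr; exact min_le_right _ _
      _ = K / 2 := by ring
  obtain ⟨N₀, hN₀⟩ := eventually_atTop.1 ((isLittleO_sq_mul_pow_div_two hlam).bound hε)
  refine ⟨κ₁ / 2, 3 * K, by positivity, by positivity, max N₀ 1, fun N hN => ?_⟩
  have hN1 : 1 ≤ N := le_of_max_le_right hN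
  have hNpos : (0 : ℝ) < N := by exact_mod_cast hN1
  have hy : 0 ≤ lam ^ N / N := by positivity
  have hsmall : N * lam ^ (N / 2) ≤ ε * (lam ^ N / N) := by
    have := hN₀ N (le_of_max_le_left hN)
    rw [Real.norm_of_nonneg (by positivity), Real.norm_of_nonneg (by positivity)] at this
    rw [mul_div_assoc', le_div_iff₀ hNpos]
    linarith
  have hKsmall : K * (N * lam ^ (N / 2)) ≤ K * ε * (lam ^ N / N) := by
    rw [mul_assoc]; gcongr
  have hKpow : K * lam ^ (N / 2) ≤ K * (N * lam ^ (N / 2)) := by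
    gcongr
    exact le_mul_of_one_le_left (by positivity) (by exact_mod_cast hN1)
  have hlo := mul_le_mul_of_nonneg_right hKε₁ hy
  have hhi := mul_le_mul_of_nonneg_right hKε₂ hy
  obtain ⟨hTlo, hThi⟩ := hT N hN1
  obtain ⟨hSlo, hShi⟩ := abs_le.1 (hST N)
  simp only [mul_div_assoc] at hTlo hThi ⊢
  constructor <;> linarith

theorem stmt_5 (lam κ₁ κ₂ : ℝ) (hlam : 1 < lam) (hκ₁ : 0 < κ₁) (hκ₂ : 0 < κ₂)
    (E : ℕ → ℝ)
    (hE : ∀ n : ℕ, 1 ≤ n → κ₁ * lam ^ n ≤ E n ∧ E n ≤ κ₂ * lam ^ n)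
    (C : ℕ → ℝ)
    (hC : ∀ n : ℕ, 1 ≤ n →
      C n = (1 / (n : ℝ)) *
        ∑ d ∈ n.divisors, ((ArithmeticFunction.moebius (n / d) : ℤ) : ℝ) * E d) :
    ∃ σ₁ σ₂ : ℝ, 0 < σ₁ ∧ 0 < σ₂ ∧ ∃ N₁ : ℕ, ∀ N : ℕ, N₁ ≤ N →
      σ₁ * lam ^ N / N ≤ ∑ n ∈ Finset.Icc 1 N, C n ∧
      ∑ n ∈ Finset.Icc 1 N, C n ≤ σ₂ * lam ^ N / N := by
  have hE₀ : ∀ n, 1 ≤ n → 0 ≤ E n := fun n hn =>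
    le_trans (by positivity) (hE n hn).1
  have hEabs : ∀ n, 1 ≤ n → |E n| ≤ κ₂ * lam ^ n := fun n hn => by
    rw [abs_of_nonneg (hE₀ n hn)]; exact (hE n hn).2
  have hCE : ∀ n, 1 ≤ n → |C n - E n / n| ≤ κ₂ * (lam / (lam - 1)) * lam ^ (n / 2) := by
    intro n hn
    have hn1 : (1 : ℝ) ≤ n := by exact_mod_cast hn
    rw [hC n hn, ← one_div_mul_eq_div (n : ℝ) (E n), ← mul_sub, abs_mul, abs_of_pos (by positivity)]
    exact (mul_le_of_le_one_left (abs_nonneg _) (div_le_one_of_le₀ hn1 n.cast_nonneg)).trans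
      (abs_sum_divisors_moebius_mul_sub_le hlam hEabs (by omega))
  refine exists_bounds_of_abs_sub_le hlam hκ₁ (by positivity : 0 < κ₂ * (lam / (lam - 1)))
    (fun N hN => ⟨?_, ?_⟩) (abs_sum_Icc_sub_sum_le ?_ hCE)
  · calc κ₁ * lam ^ N / N ≤ E N / N := by gcongr; exact (hE N hN).1
      _ ≤ ∑ n ∈ Icc 1 N, E n / n :=
        single_le_sum (fun n hn => div_nonneg (hE₀ n (mem_Icc.1 hn).1) n.cast_nonneg)
          (mem_Icc.2 ⟨hN, le_rfl⟩)
  · calc ∑ n ∈ Icc 1 N, E n / n ≤ ∑ n ∈ Icc 1 N, κ₂ * (lam ^ n / n) := by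
          gcongr with n hn
          rw [← mul_div_assoc]; gcongr; exact (hE n (mem_Icc.1 hn).1).2
      _ ≤ κ₂ * (lam / (lam - 1) * (lam ^ (N / 2) + 2 * lam ^ N / N)) := by
          rw [← mul_sum]; gcongr; exact sum_Icc_pow_div_le hlam N
      _ = _ := by ring
  · exact fun a b hab => by gcongr; exact hlam.le
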